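/- arXiv:1910.02431 — 2 statements merged into one kernel-verified Lean document; each statement's English description precedes it below -/
import Mathlib

section
/- Let T be a tree with γ'_t(T) = 2·γ'(T). Then T contains no path u-v-w (three consecutive vertices) in which all three of u, v, w are support vertices. -/
open SimpleGraph

variable {V : Type*}

/-- Two edges (as unordered pairs) are adjacent: distinct and sharing an endpoint. -/
def eAdj (e f : Sym2 V) : Prop := e ≠ f ∧ ∃ v, v ∈ e ∧ v ∈ f

/-- `F` is an edge dominating set of `G`. -/
def IsEDS (G : SimpleGraph V) (F : Set (Sym2 V)) : Prop :=
  F ⊆ G.edgeSet ∧ ∀ e ∈ G.edgeSet, e ∉ F → ∃ f ∈ F, eAdj e f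

/-- `F` is a total edge dominating set of `G`. -/
def IsTEDS (G : SimpleGraph V) (F : Set (Sym2 V)) : Prop :=
  F ⊆ G.edgeSet ∧ ∀ e ∈ G.edgeSet, ∃ f ∈ F, eAdj e f

/-- The edge domination number γ'(G). -/
noncomputable def edsNum (G : SimpleGraph V) : ℕ :=
  sInf {n | ∃ F : Set (Sym2 V), IsEDS G F ∧ F.ncard = n}

/-- The total edge domination number γ'_t(G). -/
noncomputable def tedsNum (G : SimpleGraph V) : ℕ :=
  sInf {n | ∃ F : Set (Sym2 V), IsTEDS G F ∧ F.ncard = n}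

/-- A leaf edge: an edge with an endpoint of degree 1. -/
def IsLeafEdge (G : SimpleGraph V) [∀ v : V, Fintype (G.neighborSet v)] (e : Sym2 V) : Prop :=
  e ∈ G.edgeSet ∧ ∃ v ∈ e, G.degree v = 1


/-- A support vertex: a vertex adjacent to a leaf. -/
def IsSupport (G : SimpleGraph V) [∀ v : V, Fintype (G.neighborSet v)] (v : V) : Prop :=
  ∃ u : V, G.Adj v u ∧ G.degree u = 1

/-!
Take a minimum edge dominating set `F`. If two distinct edges `f₁, f₂ ∈ F` are both adjacent to
one edge `g`, then choosing for every `f ∈ F` an adjacent edge, with `g` chosen for both `f₁` and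
`f₂`, turns `F` into a total edge dominating set of size at most `2|F| - 1`, so
`γ'_t < 2γ'`. A path `u - v - w` of support vertices forces such a configuration: every edge
dominating set contains an edge at each support vertex, and a case analysis on whether `uv` and
`vw` belong to `F` produces `f₁`, `f₂` and `g`.
-/

def HasCommonAdjEdge (G : SimpleGraph V) (F : Set (Sym2 V)) : Prop :=
  ∃ f₁ ∈ F, ∃ f₂ ∈ F, f₁ ≠ f₂ ∧ ∃ g ∈ G.edgeSet, eAdj f₁ g ∧ eAdj f₂ g

lemma eAdj_mk_mk {v a b : V} (hab : a ≠ b) : eAdj s(v, a) s(v, b) :=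
  ⟨fun h => hab (Sym2.congr_right.mp h), v, Sym2.mem_mk_left v a, Sym2.mem_mk_left v b⟩

lemma isEDS_edgeSet (G : SimpleGraph V) : IsEDS G G.edgeSet :=
  ⟨subset_rfl, fun _ he hne => absurd he hne⟩

lemma exists_isEDS_ncard_eq_edsNum (G : SimpleGraph V) :
    ∃ F, IsEDS G F ∧ F.ncard = edsNum G :=
  Nat.sInf_mem (s := {n | ∃ F : Set (Sym2 V), IsEDS G F ∧ F.ncard = n})
    ⟨_, _, isEDS_edgeSet G, rfl⟩

section Domination

variable {G : SimpleGraph V}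

lemma hasCommonAdjEdge_of_adj {F : Set (Sym2 V)} {a b : V} (hab : G.Adj a b)
    {f₁ f₂ : Sym2 V} (hf₁ : f₁ ∈ F) (hf₂ : f₂ ∈ F) (ha : a ∈ f₁) (hb : b ∈ f₂)
    (hne₁ : f₁ ≠ s(a, b)) (hne₂ : f₂ ≠ s(a, b)) : HasCommonAdjEdge G F := by
  refine ⟨f₁, hf₁, f₂, hf₂, ?_, s(a, b), hab, ⟨hne₁, a, ha, Sym2.mem_mk_left a b⟩,
    ⟨hne₂, b, hb, Sym2.mem_mk_right a b⟩⟩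
  rintro rfl
  exact hne₁ ((Sym2.mem_and_mem_iff hab.ne).mp ⟨ha, hb⟩)

lemma tedsNum_le_ncard {S : Set (Sym2 V)} (hS : IsTEDS G S) : tedsNum G ≤ S.ncard :=
  Nat.sInf_le ⟨S, hS, rfl⟩

lemma IsEDS.isTEDS_union_image {F : Set (Sym2 V)} (hF : IsEDS G F) {φ : Sym2 V → Sym2 V}
    (hφ : ∀ f ∈ F, φ f ∈ G.edgeSet ∧ eAdj f (φ f)) : IsTEDS G (F ∪ φ '' F) := by
  refine ⟨?_, fun e he => ?_⟩
  · rintro e (he | ⟨f, hf, rfl⟩)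
    exacts [hF.1 he, (hφ f hf).1]
  · by_cases heF : e ∈ F
    · exact ⟨φ e, Or.inr ⟨e, heF, rfl⟩, (hφ e heF).2⟩
    · obtain ⟨f, hf, hef⟩ := hF.2 e he heF
      exact ⟨f, Or.inl hf, hef⟩

theorem tedsNum_lt_two_mul_ncard (hTED : ∃ F₀, IsTEDS G F₀) {F : Set (Sym2 V)}
    (hF : IsEDS G F) (hfin : F.Finite) (hc : HasCommonAdjEdge G F) :
    tedsNum G < 2 * F.ncard := by
  classical
  obtain ⟨f₁, hf₁, f₂, hf₂, hne, g, hg, hg₁, hg₂⟩ := hc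
  obtain ⟨F₀, hF₀⟩ := hTED
  choose! ψ hψ using hF₀.2
  let φ : Sym2 V → Sym2 V := fun f => if f = f₁ ∨ f = f₂ then g else ψ f
  have hφ : ∀ f ∈ F, φ f ∈ G.edgeSet ∧ eAdj f (φ f) := by
    intro f hf
    by_cases hf₁₂ : f = f₁ ∨ f = f₂
    · simp only [φ, if_pos hf₁₂]
      rcases hf₁₂ with rfl | rfl
      exacts [⟨hg, hg₁⟩, ⟨hg, hg₂⟩]
    · simp only [φ, if_neg hf₁₂]
      exact ⟨hF₀.1 (hψ f (hF.1 hf)).1, (hψ f (hF.1 hf)).2⟩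
  have hφ_not_injOn : ¬ Set.InjOn φ F := fun hinj => hne (hinj hf₁ hf₂ (by simp [φ]))
  have himage : (φ '' F).ncard < F.ncard :=
    (Set.ncard_image_le hfin).lt_of_ne (mt (Set.injOn_of_ncard_image_eq · hfin) hφ_not_injOn)
  calc tedsNum G ≤ (F ∪ φ '' F).ncard := tedsNum_le_ncard (hF.isTEDS_union_image hφ)
    _ ≤ F.ncard + (φ '' F).ncard := Set.ncard_union_le _ _
    _ < 2 * F.ncard := by omega

end Domination

section Support

variable {G : SimpleGraph V} [∀ v, Fintype (G.neighborSet v)]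

lemma one_lt_degree_of_adj_of_adj {x a b : V} (ha : G.Adj x a) (hb : G.Adj x b) (hab : a ≠ b) :
    1 < G.degree x :=
  Finset.one_lt_card.mpr ⟨a, (G.mem_neighborFinset x a).mpr ha, b,
    (G.mem_neighborFinset x b).mpr hb, hab⟩

lemma eq_mk_of_degree_eq_one {x y : V} (hxy : G.Adj x y) (hy : G.degree y = 1)
    {e : Sym2 V} (he : e ∈ G.edgeSet) (hye : y ∈ e) : e = s(x, y) := by
  rw [← Sym2.other_spec hye] at he ⊢
  rw [(degree_eq_one_iff_existsUnique_adj.mp hy).unique (G.mem_edgeSet.mp he) hxy.symm,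
    Sym2.eq_swap]

lemma IsEDS.exists_mem_of_isSupport {F : Set (Sym2 V)} (hF : IsEDS G F) {x : V}
    (hx : IsSupport G x) : ∃ f ∈ F, x ∈ f := by
  obtain ⟨y, hxy, hy⟩ := hx
  by_cases hxyF : s(x, y) ∈ F
  · exact ⟨_, hxyF, Sym2.mem_mk_left x y⟩
  obtain ⟨f, hf, hne, z, hz, hzf⟩ := hF.2 _ hxy hxyF
  rcases Sym2.mem_iff.mp hz with rfl | rfl
  · exact ⟨f, hf, hzf⟩
  · exact absurd (eq_mk_of_degree_eq_one hxy hy (hF.1 hf) hzf).symm hne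

theorem IsEDS.hasCommonAdjEdge_of_isSupport_path {F : Set (Sym2 V)} (hF : IsEDS G F)
    {u v w : V} (huv : G.Adj u v) (hvw : G.Adj v w) (huw : u ≠ w)
    (hu : IsSupport G u) (hv : IsSupport G v) (hw : IsSupport G w) : HasCommonAdjEdge G F := by
  have huv_ne_vw : s(u, v) ≠ s(v, w) := by
    rw [Sym2.eq_swap]; exact (eAdj_mk_mk huw).1
  obtain ⟨eu, heuF, hueu⟩ := hF.exists_mem_of_isSupport hu
  obtain ⟨ev, hevF, hvev⟩ := hF.exists_mem_of_isSupport hv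
  obtain ⟨ew, hewF, hwew⟩ := hF.exists_mem_of_isSupport hw
  by_cases huvF : s(u, v) ∈ F <;> by_cases hvwF : s(v, w) ∈ F
  · -- `g` is the pendant edge at `v`; its leaf is neither `u` nor `w`, which have degree `≥ 2`.
    obtain ⟨v', hvv', hv'⟩ := hv
    have hv_deg : 1 < G.degree v := one_lt_degree_of_adj_of_adj huv.symm hvw huw
    have hu_deg : 1 < G.degree u := by
      obtain ⟨u', huu', hu'⟩ := hu
      exact one_lt_degree_of_adj_of_adj huv huu' (by rintro rfl; omega)
    have hw_deg : 1 < G.degree w := by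
      obtain ⟨w', hww', hw'⟩ := hw
      exact one_lt_degree_of_adj_of_adj hvw.symm hww' (by rintro rfl; omega)
    refine ⟨_, huvF, _, hvwF, huv_ne_vw, s(v, v'), hvv', ?_, eAdj_mk_mk (by rintro rfl; omega)⟩
    rw [Sym2.eq_swap]
    exact eAdj_mk_mk (by rintro rfl; omega)
  · exact hasCommonAdjEdge_of_adj hvw huvF hewF (Sym2.mem_mk_right u v) hwew huv_ne_vw
      (ne_of_mem_of_not_mem hewF hvwF)
  · exact hasCommonAdjEdge_of_adj huv heuF hvwF hueu (Sym2.mem_mk_left v w)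
      (ne_of_mem_of_not_mem heuF huvF) huv_ne_vw.symm
  · exact hasCommonAdjEdge_of_adj huv heuF hevF hueu hvev
      (ne_of_mem_of_not_mem heuF huvF) (ne_of_mem_of_not_mem hevF huvF)

end Support

theorem stmt12_general {V : Type*} [Fintype V] (T : SimpleGraph V) [DecidableRel T.Adj]
    (hTED : ∃ F : Set (Sym2 V), IsTEDS T F)
    (h : tedsNum T = 2 * edsNum T) :
    ¬ ∃ u v w : V, T.Adj u v ∧ T.Adj v w ∧ u ≠ w ∧
        IsSupport T u ∧ IsSupport T v ∧ IsSupport T w := by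
  rintro ⟨u, v, w, huv, hvw, huw, hu, hv, hw⟩
  obtain ⟨F, hF, hFcard⟩ := exists_isEDS_ncard_eq_edsNum T
  have hlt := tedsNum_lt_two_mul_ncard hTED hF (Set.toFinite F)
    (hF.hasCommonAdjEdge_of_isSupport_path huv hvw huw hu hv hw)
  omega

theorem stmt12 {V : Type*} [Fintype V] [DecidableEq V] (T : SimpleGraph V) [DecidableRel T.Adj]
    (hT : T.IsTree) (hTED : ∃ F : Set (Sym2 V), IsTEDS T F)
    (h : tedsNum T = 2 * edsNum T) :
    ¬ ∃ u v w : V, T.Adj u v ∧ T.Adj v w ∧ u ≠ w ∧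
        IsSupport T u ∧ IsSupport T v ∧ IsSupport T w :=
  stmt12_general T hTED h
end

section
/- Let T be a tree with γ'_t(T) = γ'(T), and let F_t be a minimum total edge dominating set of T. Then every connected component of the subgraph of T induced by the edge set F_t is a star with at least one edge (i.e., the component contains no path on 4 vertices). -/
open SimpleGraph

variable {V : Type*}

/-!
Deleting the middle edge `bc` of a path `abcd` inside `F_t` leaves an edge dominating set: the
ends `b` and `c` stay covered by `ab` and `cd`, so every edge that `bc` dominated is still
dominated. This gives `γ'(T) ≤ γ'_t(T) - 1`, contradicting `γ'_t(T) = γ'(T)`.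
-/

section

variable {G : SimpleGraph V} {F : Set (Sym2 V)}

lemma IsTEDS.isEDS (hF : IsTEDS G F) : IsEDS G F :=
  ⟨hF.1, fun e he _ => hF.2 e he⟩

lemma edsNum_le_ncard (hF : IsEDS G F) : edsNum G ≤ F.ncard :=
  Nat.sInf_le ⟨F, hF, rfl⟩

lemma IsEDS.sdiff_singleton {e : Sym2 V} (hF : IsEDS G F)
    (hcover : ∀ v ∈ e, ∃ f ∈ F, f ≠ e ∧ v ∈ f) : IsEDS G (F \ {e}) := by
  refine ⟨Set.sdiff_subset.trans hF.1, fun g hg hgF => ?_⟩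
  by_cases hge : g = e
  · subst hge
    obtain ⟨f, hf, hfg, hvf⟩ := hcover _ (Sym2.out_fst_mem g)
    exact ⟨f, ⟨hf, hfg⟩, hfg.symm, _, Sym2.out_fst_mem g, hvf⟩
  have hgF' : g ∉ F := fun h => hgF ⟨h, hge⟩
  obtain ⟨f, hf, hgf, v, hvg, hvf⟩ := hF.2 g hg hgF'
  by_cases hfe : f = e
  · subst hfe
    obtain ⟨f', hf', hf'f, hvf'⟩ := hcover v hvf
    exact ⟨f', ⟨hf', hf'f⟩, fun h => hgF' (h ▸ hf'), v, hvg, hvf'⟩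
  · exact ⟨f, ⟨hf, hfe⟩, hgf, v, hvg, hvf⟩

lemma IsEDS.sdiff_middle_edge {a b c d : V} (hF : IsEDS G F) (hab : s(a, b) ∈ F)
    (hcd : s(c, d) ∈ F) (hac : a ≠ c) (hbd : b ≠ d) :
    IsEDS G (F \ {s(b, c)}) := by
  refine hF.sdiff_singleton fun v hv => ?_
  rcases Sym2.mem_iff.mp hv with rfl | rfl
  · refine ⟨s(a, v), hab, ?_, Sym2.mem_mk_right a v⟩
    simp only [ne_eq, Sym2.eq_iff]
    rintro (⟨rfl, rfl⟩ | ⟨rfl, -⟩) <;> exact hac rfl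
  · refine ⟨s(v, d), hcd, ?_, Sym2.mem_mk_left v d⟩
    simp only [ne_eq, Sym2.eq_iff]
    rintro (⟨rfl, rfl⟩ | ⟨-, rfl⟩) <;> exact hbd rfl

end

theorem stmt13_general {V : Type*} [Fintype V] (T : SimpleGraph V)
    (h : tedsNum T = edsNum T)
    (Ft : Set (Sym2 V)) (hFt : IsTEDS T Ft) (hmin : Ft.ncard = tedsNum T) :
    ¬ ∃ a b c d : V, s(a, b) ∈ Ft ∧ s(b, c) ∈ Ft ∧ s(c, d) ∈ Ft ∧
        a ≠ c ∧ a ≠ d ∧ b ≠ d := by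
  rintro ⟨a, b, c, d, hab, hbc, hcd, hac, -, hbd⟩
  have hle := edsNum_le_ncard (hFt.isEDS.sdiff_middle_edge hab hcd hac hbd)
  rw [Set.ncard_sdiff_singleton_of_mem hbc] at hle
  have hpos : 0 < Ft.ncard := (Set.ncard_pos Ft.toFinite).mpr ⟨_, hbc⟩
  omega

theorem stmt13 {V : Type*} [Fintype V] (T : SimpleGraph V)
    (hT : T.IsTree) (h : tedsNum T = edsNum T)
    (Ft : Set (Sym2 V)) (hFt : IsTEDS T Ft) (hmin : Ft.ncard = tedsNum T) :
    ¬ ∃ a b c d : V, s(a, b) ∈ Ft ∧ s(b, c) ∈ Ft ∧ s(c, d) ∈ Ft ∧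
        a ≠ c ∧ a ≠ d ∧ b ≠ d :=
  stmt13_general T h Ft hFt hmin
end
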